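/- The operator Γ on ℓ²(S_N) satisfies Γ = ((H_N − H_N^{(2)})/N) I − 2((H_N^{(2)} − H_N^{(3)})/N) W^{(2)} − ((H_N − 3H_N^{(2)} + 2H_N^{(3)})/N) W^{(3)}. -/

import Mathlib

open scoped Classical
open Matrix

/-- Embedding of `Fin (k+1)` into `Fin N` (where `k : Fin N`). -/
def emb {N : ℕ} (k : Fin N) (t : Fin (k.val + 1)) : Fin N :=
  ⟨t.val, lt_of_lt_of_le t.isLt k.isLt⟩

/-- `Phi t = (N t_N)(N−1 t_{N−1})⋯(2 t_2)(1 t_1)`, the strictly monotone factorization map. -/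
def Phi {N : ℕ} (t : ∀ k : Fin N, Fin (k.val + 1)) : Equiv.Perm (Fin N) :=
  ((List.finRange N).reverse.map fun k => Equiv.swap k (emb k (t k))).prod

instance {N : ℕ} : Nonempty (∀ k : Fin N, Fin (k.val + 1)) := ⟨fun _ => 0⟩

/-- `tof π` is the tuple `(t_1(π),…,t_N(π))` of the strictly monotone factorization of `π`. -/
noncomputable def tof {N : ℕ} (π : Equiv.Perm (Fin N)) : ∀ k : Fin N, Fin (k.val + 1) :=
  Function.invFun Phi π

/-- `ptail π k` is `π_{>k} = (N t_N)⋯(k+1 t_{k+1})`. -/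
noncomputable def ptail {N : ℕ} (π : Equiv.Perm (Fin N)) (k : Fin N) : Equiv.Perm (Fin N) :=
  (((List.finRange N).reverse.filter fun j => decide (k < j)).map
    fun j => Equiv.swap j (emb j (tof π j))).prod

/-- `phead π k` is `π_{<k} = (k−1 t_{k−1})⋯(1 t_1)`. -/
noncomputable def phead {N : ℕ} (π : Equiv.Perm (Fin N)) (k : Fin N) : Equiv.Perm (Fin N) :=
  (((List.finRange N).reverse.filter fun j => decide (j < k)).map
    fun j => Equiv.swap j (emb j (tof π j))).prod

/-- The matrix of the unitary `L^τ` on `ℓ²(S_N)`, `L^τ|π⟩ = |τπ⟩`. -/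
noncomputable def Lmat {N : ℕ} (τ : Equiv.Perm (Fin N)) :
    Matrix (Equiv.Perm (Fin N)) (Equiv.Perm (Fin N)) ℂ := fun ρ π =>
  if ρ = τ * π then 1 else 0

/-- The matrix of the unitary `R^σ` on `ℓ²(S_N)`, `R^σ|π⟩ = |πσ⁻¹⟩`. -/
noncomputable def Rmat {N : ℕ} (σ : Equiv.Perm (Fin N)) :
    Matrix (Equiv.Perm (Fin N)) (Equiv.Perm (Fin N)) ℂ := fun ρ π =>
  if ρ = π * σ⁻¹ then 1 else 0

/-- The matrix of the orthogonal projection `P_x` on `ℓ²(S_N)`, determined by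
`P_x|π⟩ = (1/x) ∑_{s=1}^{x} |π_{>x} (x s) π_{<x}⟩`. -/
noncomputable def PxPerm {N : ℕ} (x : Fin N) :
    Matrix (Equiv.Perm (Fin N)) (Equiv.Perm (Fin N)) ℂ := fun ρ π =>
  if ∃ s : Fin (x.val + 1), ρ = ptail π x * Equiv.swap x (emb x s) * phead π x then
    ((x.val : ℂ) + 1)⁻¹
  else 0

/-- `W^{(ℓ)}`, the average of `R^γ` over all `ℓ`-cycles `γ ∈ S_N`. -/
noncomputable def Wmat {N : ℕ} (l : ℕ) :
    Matrix (Equiv.Perm (Fin N)) (Equiv.Perm (Fin N)) ℂ :=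
  (((Finset.univ.filter fun γ : Equiv.Perm (Fin N) =>
        γ.IsCycle ∧ γ.support.card = l).card : ℂ))⁻¹ •
    ∑ γ ∈ Finset.univ.filter
        (fun γ : Equiv.Perm (Fin N) => γ.IsCycle ∧ γ.support.card = l),
      Rmat γ

/-- The twirled operator
`Γ = (1/N) ∑_{x=1}^{N} (1/x) · (1/(N!)²) ∑_{σ,τ} (L^τ R^σ)† (I − P_x) (L^τ R^σ)` on `ℓ²(S_N)`. -/
noncomputable def GammaM {N : ℕ} :
    Matrix (Equiv.Perm (Fin N)) (Equiv.Perm (Fin N)) ℂ :=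
  (N : ℂ)⁻¹ • ∑ x : Fin N, ((x.val : ℂ) + 1)⁻¹ •
    ((((N.factorial : ℂ)) ^ 2)⁻¹ •
      ∑ σ : Equiv.Perm (Fin N), ∑ τ : Equiv.Perm (Fin N),
        (Lmat τ * Rmat σ)ᴴ *
          ((1 : Matrix (Equiv.Perm (Fin N)) (Equiv.Perm (Fin N)) ℂ) - PxPerm x) *
          (Lmat τ * Rmat σ))

/-- The generalized harmonic number `H_N^{(m)} = ∑_{x=1}^{N} x^{−m}` (as a complex scalar). -/
noncomputable def Hm (N m : ℕ) : ℂ := ∑ x ∈ Finset.range N, (((x : ℂ) + 1) ^ m)⁻¹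

/-!
Conjugating by `U = L^τ R^σ` moves the entry `(ρ, π)` of a matrix to `(τρσ⁻¹, τπσ⁻¹)`, so the
average of `U† P_x U` only sees the conjugacy class of `ρ⁻¹π`. Writing the column `π` of `P_x`
through the factorization `π = π_{>x} (x r) π_{<x}`, its nonzero entries sit at the `ρ` for which
`ρ⁻¹π` is conjugate, by `π_{<x}`, to `(x s)(x r)`, and as `π` runs through `S_N` the index `r` is
uniform on `[x]`. Among the `x²` pairs `(s, r)`, `x` give the identity, `2(x - 1)` a transposition
and `(x - 1)(x - 2)` a 3-cycle, so the average of `U† P_x U` is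
`x⁻² (x I + 2(x - 1) W⁽²⁾ + (x - 1)(x - 2) W⁽³⁾)`; averaging `x⁻¹ (I - ·)` of it over `x` leaves the
harmonic sums.
-/

open Finset

theorem ite_exists_eq_sum {ι M : Type*} [Fintype ι] [AddCommMonoid M] {p : ι → Prop}
    [DecidablePred p] [Decidable (∃ a, p a)] (hp : ∀ a b, p a → p b → a = b) (c : M) :
    (if ∃ a, p a then c else 0) = ∑ a, if p a then c else 0 := by
  split_ifs with h
  · obtain ⟨a, ha⟩ := h
    rw [Fintype.sum_eq_single a fun b hb => if_neg fun hpb => hb (hp b a hpb ha), if_pos ha]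
  · exact (Fintype.sum_eq_zero _ fun a => if_neg fun ha => h ⟨a, ha⟩).symm

theorem Fintype.card_smul_sum_apply {ι M : Type*} [Fintype ι] [DecidableEq ι] {β : ι → Type*}
    [∀ i, Fintype (β i)] [∀ i, DecidableEq (β i)] [AddCommMonoid M] (i : ι) (F : β i → M) :
    Fintype.card (β i) • ∑ t : (∀ j, β j), F (t i) = Fintype.card (∀ j, β j) • ∑ b, F b := by
  have hfiber : ∀ b : β i, #{t : ∀ j, β j | t i = b} = ∏ j ∈ univ.erase i, Fintype.card (β j) := by
    intro b
    simpa using Fintype.card_filter_piFinset_eq_of_mem (fun j => (univ : Finset (β j))) i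
      (mem_univ b)
  calc Fintype.card (β i) • ∑ t : (∀ j, β j), F (t i)
      = Fintype.card (β i) • ∑ b, #{t : ∀ j, β j | t i = b} • F b := by
        rw [← Finset.sum_fiberwise univ (fun t : ∀ j, β j => t i)]
        congr! 2 with b
        rw [Finset.sum_congr rfl fun t ht => congrArg F (mem_filter.1 ht).2, Finset.sum_const]
    _ = Fintype.card (∀ j, β j) • ∑ b, F b := by
        simp only [hfiber, ← smul_sum, smul_smul, Fintype.card_pi,
          ← Finset.mul_prod_erase univ _ (mem_univ i)]

theorem sum_sum_mul_mul_inv_eq {G M : Type*} [Group G] [Fintype G] [AddCommMonoid M]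
    (F : G → G → M) (ρ π : G) :
    ∑ σ, ∑ τ, F (τ * ρ * σ⁻¹) (τ * π * σ⁻¹) = ∑ σ, ∑ α, F α (α * (σ * (ρ⁻¹ * π) * σ⁻¹)) :=
  Finset.sum_congr rfl fun σ _ =>
    Fintype.sum_equiv (Equiv.mulRight (ρ * σ⁻¹)) _ _ fun τ => by simp [mul_assoc]

theorem card_conj_eq_mul_card_isConj {G : Type*} [Group G] [Fintype G] [DecidableEq G]
    {g c : G} (hc : IsConj g c) :
    #{σ | σ * g * σ⁻¹ = c} * #{γ | IsConj g γ} = Fintype.card G := by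
  have hfiber : ∀ γ ∈ ({γ | IsConj g γ} : Finset G),
      #{σ | σ * g * σ⁻¹ = γ} = #{σ | σ * g * σ⁻¹ = c} := by
    intro γ hγ
    obtain ⟨δ, rfl⟩ := isConj_iff.1 (hc.symm.trans (mem_filter.1 hγ).2)
    refine Finset.card_equiv (Equiv.mulLeft δ⁻¹) fun σ => ?_
    simp only [mem_filter, mem_univ, true_and, Equiv.coe_mulLeft]
    constructor <;> intro h
    · calc δ⁻¹ * σ * g * (δ⁻¹ * σ)⁻¹ = δ⁻¹ * (σ * g * σ⁻¹) * δ := by group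
        _ = c := by rw [h]; group
    · rw [← h]; group
  rw [← card_univ, card_eq_sum_card_fiberwise (s := univ) (f := fun σ => σ * g * σ⁻¹)
    (t := {γ | IsConj g γ}) fun σ _ => by simp [isConj_iff], sum_const_nat hfiber, mul_comm]

theorem sum_ite_conj_eq {G K : Type*} [Group G] [Fintype G] [DecidableEq G] [DivisionRing K]
    [CharZero K] (g c : G) :
    (∑ σ : G, if σ * g * σ⁻¹ = c then (1 : K) else 0)
      = Fintype.card G * if IsConj g c then (#{γ | IsConj g γ} : K)⁻¹ else 0 := by
  split_ifs with hc
  · have hpos : (#{γ | IsConj g γ} : K) ≠ 0 :=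
      Nat.cast_ne_zero.2 (card_ne_zero_of_mem (mem_filter.2 ⟨mem_univ g, IsConj.refl g⟩))
    rw [sum_boole, ← card_conj_eq_mul_card_isConj hc, Nat.cast_mul, mul_inv_cancel_right₀ hpos]
  · rw [mul_zero]
    exact Fintype.sum_eq_zero _ fun σ => if_neg fun h => hc (isConj_iff.2 ⟨σ, h⟩)

theorem ite_isConj_one {G K : Type*} [Group G] [Fintype G] [DecidableEq G] [DivisionRing K]
    (g : G) : (if IsConj g 1 then (#{γ | IsConj g γ} : K)⁻¹ else 0) = if g = 1 then 1 else 0 := by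
  simp only [isConj_one_left]
  split_ifs with hg
  · subst hg
    simp [filter_eq]
  · rfl

theorem mul_mul_mul_inv_eq_iff {G : Type*} [Group G] (u a b l h : G) :
    u * b * l * h⁻¹ = u * a * l ↔ l * h * l⁻¹ = a⁻¹ * b := by
  rw [mul_inv_eq_iff_eq_mul, ← inv_mul_eq_iff_eq_mul,
    show (u * a * l)⁻¹ * (u * b * l) = l⁻¹ * (a⁻¹ * b) * l by group]
  constructor <;> intro H <;> rw [← H] <;> group

theorem Fin.sum_sum_ite_eq_ite_last {R : Type*} [CommRing R] (n : ℕ) (a b c : R) :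
    (∑ s : Fin (n + 1), ∑ r : Fin (n + 1),
      if s = r then a else if s = Fin.last n ∨ r = Fin.last n then b else c)
      = (n + 1) * a + 2 * n * b + n * (n - 1) * c := by
  have hdiag : ∀ i : Fin n, (∑ j : Fin n, if i = j then a else c) = a + (n - 1) * c := by
    intro i
    rw [Fintype.sum_eq_add_sum_compl i, if_pos rfl,
      Finset.sum_congr rfl fun j hj => if_neg (Ne.symm (mem_compl.1 hj ∘ mem_singleton.2)),
      Finset.sum_const, card_compl, card_singleton, Fintype.card_fin, nsmul_eq_mul,
      Nat.cast_pred (Fin.pos i)]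
  simp [Fin.sum_univ_castSucc, Fin.castSucc_ne_last, (Fin.castSucc_ne_last _).symm, hdiag]
  ring

theorem List.Pairwise.eq_filter_lt_append_cons_filter_gt {α : Type*} [LinearOrder α]
    {l : List α} (hl : l.Pairwise (· < ·)) {x : α} (hx : x ∈ l) :
    l = l.filter (· < x) ++ x :: l.filter (x < ·) := by
  induction l with
  | nil => simp at hx
  | cons a t ih =>
    rw [List.pairwise_cons] at hl
    rcases List.mem_cons.1 hx with rfl | hx
    · have hlow : t.filter (· < x) = [] :=
        List.filter_eq_nil_iff.2 fun b hb => by simpa using (hl.1 b hb).le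
      have hhigh : t.filter (x < ·) = t :=
        List.filter_eq_self.2 fun b hb => by simpa using hl.1 b hb
      simp [hlow, hhigh]
    · have hax := hl.1 x hx
      simp [hax, not_lt.2 hax.le, ← ih hl.2 hx]

section Factorization

variable {N : ℕ}

def phiTail (t : ∀ k : Fin N, Fin (k.val + 1)) (x : Fin N) : Equiv.Perm (Fin N) :=
  (((List.finRange N).reverse.filter fun j => decide (x < j)).map
    fun j => Equiv.swap j (emb j (t j))).prod

def phiHead (t : ∀ k : Fin N, Fin (k.val + 1)) (x : Fin N) : Equiv.Perm (Fin N) :=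
  (((List.finRange N).reverse.filter fun j => decide (j < x)).map
    fun j => Equiv.swap j (emb j (t j))).prod

theorem Phi_eq_phiTail_mul_swap_mul_phiHead (t : ∀ k : Fin N, Fin (k.val + 1)) (x : Fin N) :
    Phi t = phiTail t x * Equiv.swap x (emb x (t x)) * phiHead t x := by
  unfold Phi phiTail phiHead
  rw [List.filter_reverse, List.filter_reverse]
  conv_lhs => rw [(List.pairwise_lt_finRange N).eq_filter_lt_append_cons_filter_gt
    (List.mem_finRange x)]
  simp [mul_assoc]

theorem phiHead_apply_of_le (t : ∀ k : Fin N, Fin (k.val + 1)) {x a : Fin N} (ha : x ≤ a) :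
    phiHead t x a = a := by
  have : phiHead t x ∈ MulAction.stabilizer (Equiv.Perm (Fin N)) a := by
    refine list_prod_mem fun g hg => ?_
    obtain ⟨j, hj, rfl⟩ := List.mem_map.1 hg
    have hjx : j < x := by simpa using (List.mem_filter.1 hj).2
    rw [MulAction.mem_stabilizer_iff, Equiv.Perm.smul_def]
    refine Equiv.swap_apply_of_ne_of_ne (ne_of_gt (hjx.trans_le ha)) fun h => ?_
    exact (((t j).isLt.trans_le hjx).trans_le ha).ne' (congrArg Fin.val h)
  simpa [MulAction.mem_stabilizer_iff, Equiv.Perm.smul_def] using this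

theorem emb_injective (x : Fin N) : Function.Injective (emb x) := fun a b h =>
  Fin.ext (by simpa [emb] using congrArg Fin.val h)

theorem Phi_injective : Function.Injective (Phi (N := N)) := by
  intro t t' h
  funext k
  induction k using WellFoundedGT.induction with
  | _ k ih =>
    have htail : phiTail t k = phiTail t' k := by
      unfold phiTail
      congr 1
      refine List.map_congr_left fun j hj => ?_
      rw [ih j (by simpa using (List.mem_filter.1 hj).2)]
    have hrest : Equiv.swap k (emb k (t k)) * phiHead t k
        = Equiv.swap k (emb k (t' k)) * phiHead t' k := by
      have := h
      rw [Phi_eq_phiTail_mul_swap_mul_phiHead t k, Phi_eq_phiTail_mul_swap_mul_phiHead t' k,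
        htail, mul_assoc, mul_assoc] at this
      exact mul_left_cancel this
    have hk := congrArg (· k) hrest
    simp only [Equiv.Perm.mul_apply, phiHead_apply_of_le _ le_rfl, Equiv.swap_apply_left] at hk
    exact emb_injective k hk

theorem card_factorization_tuples :
    Fintype.card (∀ k : Fin N, Fin (k.val + 1)) = N.factorial := by
  simp only [Fintype.card_pi, Fintype.card_fin]
  rw [Fin.prod_univ_eq_prod_range (· + 1), Finset.prod_range_add_one_eq_factorial]

noncomputable def PhiEquiv : (∀ k : Fin N, Fin (k.val + 1)) ≃ Equiv.Perm (Fin N) :=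
  Equiv.ofBijective Phi <| (Fintype.bijective_iff_injective_and_card _).2
    ⟨Phi_injective, by rw [card_factorization_tuples, Fintype.card_perm, Fintype.card_fin]⟩

theorem tof_Phi (t : ∀ k : Fin N, Fin (k.val + 1)) : tof (Phi t) = t :=
  Function.leftInverse_invFun Phi_injective t

theorem PxPerm_apply_Phi (x : Fin N) (α : Equiv.Perm (Fin N)) (t : ∀ k : Fin N, Fin (k.val + 1)) :
    PxPerm x α (Phi t) = if ∃ s : Fin (x.val + 1),
        α = phiTail t x * Equiv.swap x (emb x s) * phiHead t x then ((x.val : ℂ) + 1)⁻¹ else 0 := by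
  unfold PxPerm ptail phead
  rw [tof_Phi]
  rfl

end Factorization

namespace Equiv.Perm

variable {α : Type*} [Fintype α] [DecidableEq α]

theorem isConj_iff_of_isCycle {g c : Perm α} (hc : c.IsCycle) :
    IsConj g c ↔ g.IsCycle ∧ #g.support = #c.support := by
  refine ⟨fun h => ?_, fun h => (h.1.isConj_iff hc).2 h.2⟩
  have hg : g.IsCycle := by
    obtain ⟨δ, rfl⟩ := isConj_iff.1 h.symm
    exact hc.conj
  exact ⟨hg, (hg.isConj_iff hc).1 h⟩

noncomputable def cycleWeight (l : ℕ) (g : Perm α) : ℂ :=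
  if g.IsCycle ∧ #g.support = l then (#{γ : Perm α | γ.IsCycle ∧ #γ.support = l} : ℂ)⁻¹ else 0

theorem ite_isConj_of_isCycle (g : Perm α) {c : Perm α} (hc : c.IsCycle) :
    (if IsConj g c then (#{γ | IsConj g γ} : ℂ)⁻¹ else 0) = cycleWeight #c.support g := by
  simp only [cycleWeight, ← isConj_iff_of_isCycle hc]
  split_ifs with hgc
  · congr 3
    exact filter_congr fun γ _ => ⟨fun h => h.symm.trans hgc, fun h => hgc.trans h.symm⟩
  · rfl

end Equiv.Perm

section SwapProducts

variable {N : ℕ}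

theorem emb_last (x : Fin N) : emb x (Fin.last x.val) = x := Fin.ext rfl

theorem emb_ne_of_ne_last (x : Fin N) {r : Fin (x.val + 1)} (hr : r ≠ Fin.last x.val) :
    emb x r ≠ x := fun h => hr (emb_injective x (h.trans (emb_last x).symm))

theorem isCycle_swap_mul_swap_emb (x : Fin N) {s r : Fin (x.val + 1)} (hsr : s ≠ r) :
    (Equiv.swap x (emb x s) * Equiv.swap x (emb x r)).IsCycle ∧
      #(Equiv.swap x (emb x s) * Equiv.swap x (emb x r)).support
        = if s = Fin.last x.val ∨ r = Fin.last x.val then 2 else 3 := by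
  by_cases hs : s = Fin.last x.val
  · subst hs
    have hr := (emb_ne_of_ne_last x (Ne.symm hsr)).symm
    simp only [emb_last, Equiv.swap_self, Equiv.Perm.one_def.symm, one_mul, true_or, if_true]
    exact ⟨Equiv.Perm.isCycle_swap hr, Equiv.Perm.card_support_swap hr⟩
  by_cases hr : r = Fin.last x.val
  · subst hr
    have hs' := (emb_ne_of_ne_last x hs).symm
    simp only [emb_last, Equiv.swap_self, Equiv.Perm.one_def.symm, mul_one, or_true, if_true]
    exact ⟨Equiv.Perm.isCycle_swap hs', Equiv.Perm.card_support_swap hs'⟩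
  rw [if_neg (by tauto)]
  have h3 := Equiv.Perm.isThreeCycle_swap_mul_swap_same (emb_ne_of_ne_last x hs).symm
    (emb_ne_of_ne_last x hr).symm fun h => hsr (emb_injective x h)
  exact ⟨h3.isCycle, h3.card_support⟩

theorem ite_isConj_swap_mul_swap_emb (g : Equiv.Perm (Fin N)) (x : Fin N) (s r : Fin (x.val + 1)) :
    (if IsConj g (Equiv.swap x (emb x s) * Equiv.swap x (emb x r))
      then (#{γ | IsConj g γ} : ℂ)⁻¹ else 0)
      = if s = r then (if g = 1 then 1 else 0)
        else if s = Fin.last x.val ∨ r = Fin.last x.val then g.cycleWeight 2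
        else g.cycleWeight 3 := by
  by_cases hsr : s = r
  · rw [if_pos hsr, hsr, Equiv.swap_mul_self, ite_isConj_one]
  obtain ⟨hcyc, hcard⟩ := isCycle_swap_mul_swap_emb x hsr
  rw [if_neg hsr, g.ite_isConj_of_isCycle hcyc, hcard]
  split_ifs <;> rfl

end SwapProducts

section Twirl

variable {N : ℕ}

theorem Lmat_mul_Rmat_apply (τ σ α β : Equiv.Perm (Fin N)) :
    (Lmat τ * Rmat σ) α β = if α = τ * β * σ⁻¹ then 1 else 0 := by
  simp [Matrix.mul_apply, Lmat, Rmat, mul_assoc]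

theorem conjTranspose_mul_mul_Lmat_mul_Rmat_apply
    (M : Matrix (Equiv.Perm (Fin N)) (Equiv.Perm (Fin N)) ℂ) (τ σ ρ π : Equiv.Perm (Fin N)) :
    ((Lmat τ * Rmat σ)ᴴ * M * (Lmat τ * Rmat σ)) ρ π = M (τ * ρ * σ⁻¹) (τ * π * σ⁻¹) := by
  have hU := Lmat_mul_Rmat_apply τ σ
  generalize Lmat τ * Rmat σ = U at hU
  simp [Matrix.mul_apply, hU]

noncomputable def twirl (M : Matrix (Equiv.Perm (Fin N)) (Equiv.Perm (Fin N)) ℂ) :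
    Matrix (Equiv.Perm (Fin N)) (Equiv.Perm (Fin N)) ℂ :=
  (((N.factorial : ℂ)) ^ 2)⁻¹ •
    ∑ σ : Equiv.Perm (Fin N), ∑ τ : Equiv.Perm (Fin N), (Lmat τ * Rmat σ)ᴴ * M * (Lmat τ * Rmat σ)

theorem twirl_apply (M : Matrix (Equiv.Perm (Fin N)) (Equiv.Perm (Fin N)) ℂ)
    (ρ π : Equiv.Perm (Fin N)) :
    twirl M ρ π = (((N.factorial : ℂ)) ^ 2)⁻¹ *
      ∑ σ : Equiv.Perm (Fin N), ∑ τ : Equiv.Perm (Fin N), M (τ * ρ * σ⁻¹) (τ * π * σ⁻¹) := by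
  simp only [twirl, Matrix.smul_apply, Matrix.sum_apply,
    conjTranspose_mul_mul_Lmat_mul_Rmat_apply, smul_eq_mul]

theorem twirl_sub (A B : Matrix (Equiv.Perm (Fin N)) (Equiv.Perm (Fin N)) ℂ) :
    twirl (A - B) = twirl A - twirl B := by
  simp only [twirl, Matrix.mul_sub, Matrix.sub_mul, Finset.sum_sub_distrib, smul_sub]

theorem twirl_one : twirl (1 : Matrix (Equiv.Perm (Fin N)) (Equiv.Perm (Fin N)) ℂ) = 1 := by
  ext ρ π
  have hfac : ((N.factorial : ℂ)) ≠ 0 := Nat.cast_ne_zero.2 N.factorial_ne_zero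
  simp [twirl_apply, Matrix.one_apply, Fintype.card_perm, ← sq, hfac]

theorem Wmat_apply (l : ℕ) (ρ π : Equiv.Perm (Fin N)) :
    Wmat l ρ π = (ρ⁻¹ * π).cycleWeight l := by
  have hR : ∀ γ, Rmat γ ρ π = if ρ⁻¹ * π = γ then (1 : ℂ) else 0 := fun γ => by
    simp only [Rmat, eq_mul_inv_iff_mul_eq, inv_mul_eq_iff_eq_mul]
    exact if_congr eq_comm rfl rfl
  simp [Wmat, Matrix.sum_apply, hR, Equiv.Perm.cycleWeight, Finset.sum_ite_eq]

theorem sum_PxPerm_mul_right (x : Fin N) (h : Equiv.Perm (Fin N)) :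
    ∑ α, PxPerm x α (α * h) = ((x.val : ℂ) + 1)⁻¹ *
      ∑ t : ∀ k : Fin N, Fin (k.val + 1), ∑ s : Fin (x.val + 1),
        if phiHead t x * h * (phiHead t x)⁻¹ = Equiv.swap x (emb x s) * Equiv.swap x (emb x (t x))
        then 1 else 0 := by
  have hswap : ∀ s : Fin (x.val + 1), Equiv.swap x (emb x s) = (Equiv.swap x (emb x s))⁻¹ :=
    fun s => (Equiv.swap_inv _ _).symm
  calc ∑ α, PxPerm x α (α * h) = ∑ β, PxPerm x (β * h⁻¹) β :=
        Fintype.sum_equiv (Equiv.mulRight h) _ _ fun α => by simp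
    _ = ∑ t, PxPerm x (Phi t * h⁻¹) (Phi t) := (Equiv.sum_comp PhiEquiv _).symm
    _ = _ := by
      rw [Finset.mul_sum]
      refine Finset.sum_congr rfl fun t _ => ?_
      rw [PxPerm_apply_Phi, ite_exists_eq_sum, Finset.mul_sum]
      · refine Finset.sum_congr rfl fun s _ => ?_
        rw [mul_ite, mul_one, mul_zero]
        refine if_congr ?_ rfl rfl
        rw [Phi_eq_phiTail_mul_swap_mul_phiHead t x, mul_mul_mul_inv_eq_iff, ← hswap]
      · intro s s' hs hs'
        have hss' := congrArg (fun f : Equiv.Perm (Fin N) => f x)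
          (mul_left_cancel (mul_right_cancel (hs.symm.trans hs')))
        exact emb_injective x (by simpa using hss')

theorem sum_sum_PxPerm_mul_conj (x : Fin N) (g : Equiv.Perm (Fin N)) :
    ∑ σ, ∑ α, PxPerm x α (α * (σ * g * σ⁻¹)) = ((x.val : ℂ) + 1)⁻¹ * N.factorial *
      ∑ t : ∀ k : Fin N, Fin (k.val + 1), ∑ s : Fin (x.val + 1),
        if IsConj g (Equiv.swap x (emb x s) * Equiv.swap x (emb x (t x)))
        then (#{γ | IsConj g γ} : ℂ)⁻¹ else 0 := by
  rw [Finset.sum_congr rfl fun σ _ => sum_PxPerm_mul_right x _, ← Finset.mul_sum, mul_assoc]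
  congr 1
  rw [Finset.sum_comm, Finset.mul_sum]
  refine Finset.sum_congr rfl fun t _ => ?_
  rw [Finset.sum_comm, Finset.mul_sum]
  refine Finset.sum_congr rfl fun s _ => ?_
  set l := phiHead t x
  calc ∑ σ, (if l * (σ * g * σ⁻¹) * l⁻¹ = Equiv.swap x (emb x s) * Equiv.swap x (emb x (t x))
          then (1 : ℂ) else 0)
      = ∑ σ, if σ * g * σ⁻¹ = Equiv.swap x (emb x s) * Equiv.swap x (emb x (t x))
          then (1 : ℂ) else 0 :=
        Fintype.sum_equiv (Equiv.mulLeft l) _ _ fun σ => by simp [mul_assoc]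
    _ = _ := by rw [sum_ite_conj_eq, Fintype.card_perm, Fintype.card_fin]

-- With the paper's 1-based indexing, `x.val + 1` is `x`.
theorem twirl_PxPerm (x : Fin N) :
    twirl (PxPerm x) = (((x.val : ℂ) + 1) ^ 2)⁻¹ •
      (((x.val : ℂ) + 1) • 1 + (2 * (x.val : ℂ)) • Wmat 2
        + ((x.val : ℂ) * ((x.val : ℂ) - 1)) • Wmat 3) := by
  ext ρ π
  have hX : ((x.val : ℂ) + 1) ≠ 0 := Nat.cast_add_one_ne_zero x.val
  have hfac : ((N.factorial : ℂ)) ≠ 0 := Nat.cast_ne_zero.2 N.factorial_ne_zero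
  set g := ρ⁻¹ * π
  have hcoord := Fintype.card_smul_sum_apply (β := fun k : Fin N => Fin (k.val + 1)) x
    fun r => ∑ s : Fin (x.val + 1),
      if IsConj g (Equiv.swap x (emb x s) * Equiv.swap x (emb x r))
      then (#{γ | IsConj g γ} : ℂ)⁻¹ else 0
  rw [card_factorization_tuples, Fintype.card_fin, nsmul_eq_mul, nsmul_eq_mul,
    Nat.cast_add_one, ← eq_inv_mul_iff_mul_eq₀ hX] at hcoord
  rw [twirl_apply, sum_sum_mul_mul_inv_eq (PxPerm x), sum_sum_PxPerm_mul_conj, hcoord]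
  simp_rw [ite_isConj_swap_mul_swap_emb]
  rw [Finset.sum_comm, Fin.sum_sum_ite_eq_ite_last]
  simp only [Matrix.smul_apply, Matrix.add_apply, Matrix.one_apply, Wmat_apply, smul_eq_mul,
    ← inv_mul_eq_one (a := ρ), mul_ite, mul_one, mul_zero]
  field_simp
  ring

end Twirl

theorem Hm_eq_sum_fin (N m : ℕ) : Hm N m = ∑ x : Fin N, (((x.val : ℂ) + 1) ^ m)⁻¹ :=
  (Fin.sum_univ_eq_sum_range (fun i => (((i : ℂ) + 1) ^ m)⁻¹) N).symm

theorem stmt14_general {N : ℕ} :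
    GammaM (N := N)
      = ((Hm N 1 - Hm N 2) / (N : ℂ)) •
            (1 : Matrix (Equiv.Perm (Fin N)) (Equiv.Perm (Fin N)) ℂ)
        - (2 * ((Hm N 2 - Hm N 3) / (N : ℂ))) • Wmat 2
        - ((Hm N 1 - 3 * Hm N 2 + 2 * Hm N 3) / (N : ℂ)) • Wmat 3 := by
  have hterm : ∀ x : Fin N, ((x.val : ℂ) + 1)⁻¹ • twirl (1 - PxPerm x)
      = ((((x.val : ℂ) + 1) ^ 1)⁻¹ - (((x.val : ℂ) + 1) ^ 2)⁻¹) • 1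
        - (2 * ((((x.val : ℂ) + 1) ^ 2)⁻¹ - (((x.val : ℂ) + 1) ^ 3)⁻¹)) • Wmat 2
        - ((((x.val : ℂ) + 1) ^ 1)⁻¹ - 3 * (((x.val : ℂ) + 1) ^ 2)⁻¹
            + 2 * (((x.val : ℂ) + 1) ^ 3)⁻¹) • Wmat 3 := by
    intro x
    have hX : ((x.val : ℂ) + 1) ≠ 0 := Nat.cast_add_one_ne_zero x.val
    rw [twirl_sub, twirl_one, twirl_PxPerm]
    match_scalars <;> field_simp <;> ring
  calc GammaM (N := N)
      = (N : ℂ)⁻¹ • ∑ x : Fin N, ((x.val : ℂ) + 1)⁻¹ • twirl (1 - PxPerm x) := rfl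
    _ = _ := by
      simp only [hterm, Finset.sum_sub_distrib, Finset.sum_add_distrib, ← Finset.sum_smul,
        ← Finset.mul_sum, Hm_eq_sum_fin]
      match_scalars <;> ring

/-- `Γ = ((H_N − H_N^{(2)})/N) I − 2((H_N^{(2)} − H_N^{(3)})/N) W^{(2)}
− ((H_N − 3H_N^{(2)} + 2H_N^{(3)})/N) W^{(3)}` on `ℓ²(S_N)`. -/
theorem stmt14 {N : ℕ} (hN : 3 ≤ N) :
    GammaM (N := N)
      = ((Hm N 1 - Hm N 2) / (N : ℂ)) •
            (1 : Matrix (Equiv.Perm (Fin N)) (Equiv.Perm (Fin N)) ℂ)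
        - (2 * ((Hm N 2 - Hm N 3) / (N : ℂ))) • Wmat 2
        - ((Hm N 1 - 3 * Hm N 2 + 2 * Hm N 3) / (N : ℂ)) • Wmat 3 :=
  stmt14_general
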